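/- For all a, b ∈ D_S, one has 𝔉(a) = 𝔉(b) if and only if F_a = F_b and E^u(a) = E^u(b) for every u ∈ V. (That is, two good valid inequalities for S can be rotated to define exactly the same collection of faces of P if and only if they define the same face of S and have the same minimizing rooted-triangle edge sets at every vertex.) -/

import Mathlib

open scoped BigOperators

abbrev Edge (n : ℕ) := {e : Sym2 (Fin n) // ¬ e.IsDiag}

namespace TSP
variable {n : ℕ}
noncomputable section

def dot (a x : Edge n → ℝ) : ℝ := ∑ e, a e * x e
def ev (a : Edge n → ℝ) (u v : Fin n) : ℝ :=
  if h : u = v then 0 else a ⟨s(u, v), fun hd => h (Sym2.mk_isDiag_iff.mp hd)⟩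
def indic (u v : Fin n) : Edge n → ℝ := fun e => if e.val = s(u, v) then 1 else 0
def delta (u : Fin n) : Edge n → ℝ := fun e => if u ∈ e.val then 1/2 else 0
def RootedTri (u v w : Fin n) : Prop := v ≠ w ∧ u ≠ v ∧ u ≠ w
def tri (a : Edge n → ℝ) (u v w : Fin n) : ℝ := ev a v u + ev a u w - ev a v w
def IsMetric (a : Edge n → ℝ) : Prop := ∀ u v w, RootedTri u v w → 0 ≤ tri a u v w
def IsTT (a : Edge n → ℝ) : Prop :=
  IsMetric a ∧ ∀ u, ∃ v w, RootedTri u v w ∧ tri a u v w = 0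
def lam (a : Edge n → ℝ) (u : Fin n) : ℝ :=
  sInf {r | ∃ v w, RootedTri u v w ∧ r = tri a u v w}
def theta (a : Edge n → ℝ) : Edge n → ℝ := fun e => a e - ∑ u, lam a u * delta u e
def zvec (n : ℕ) : Edge n → ℝ := fun _ => 2 / ((n : ℝ) - 1)
def gamma (a : Edge n → ℝ) : ℝ := -1 + dot a (zvec n) - ∑ u, lam a u
def nextF (i : Fin n) : Fin n := ⟨(i.val + 1) % n, Nat.mod_lt _ i.pos⟩
def hamVec (σ : Equiv.Perm (Fin n)) : Edge n → ℝ :=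
  fun e => if ∃ i : Fin n, e.val = s(σ i, σ (nextF i)) then 1 else 0
def stsp (n : ℕ) : Set (Edge n → ℝ) :=
  convexHull ℝ {x | ∃ σ : Equiv.Perm (Fin n), x = hamVec σ}
def degree (x : Edge n → ℝ) (u : Fin n) : ℝ := ∑ e, if u ∈ e.val then x e else 0
lemma ev_symm (a : Edge n → ℝ) (u v : Fin n) : ev a u v = ev a v u := by
  unfold ev
  rcases eq_or_ne u v with h | h
  · subst h; simp
  · rw [dif_neg h, dif_neg (Ne.symm h)]
    congr 1
    exact Subtype.ext (Sym2.eq_swap)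
def supportGraph (x : Edge n → ℝ) : SimpleGraph (Fin n) where
  Adj u v := u ≠ v ∧ 0 < ev x u v
  symm := ⟨fun u v h => ⟨h.1.symm, by rw [ev_symm]; exact h.2⟩⟩
  loopless := ⟨fun u h => h.1 rfl⟩
def IsEulerian (x : Edge n → ℝ) : Prop :=
  (∀ e, ∃ m : ℕ, x e = m) ∧ (supportGraph x).Connected ∧
    ∀ u, ∃ m : ℕ, 0 < m ∧ degree x u = 2 * m
def gtsp (n : ℕ) : Set (Edge n → ℝ) := convexHull ℝ {x | IsEulerian x}
def IsFaceOf (Q F : Set (Edge n → ℝ)) : Prop :=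
  ∃ a α, (∀ x ∈ Q, α ≤ dot a x) ∧ F = {x ∈ Q | dot a x = α}
def IsGood (F : Set (Edge n → ℝ)) : Prop := ∀ e : Edge n, ∃ x ∈ F, 0 < x e
def adim (X : Set (Edge n → ℝ)) : ℕ := Module.finrank ℝ (affineSpan ℝ X).direction
def direc (F : Set (Edge n → ℝ)) : Submodule ℝ (Edge n → ℝ) :=
  Submodule.span ℝ {d | ∃ x ∈ F, ∃ y ∈ F, d = y - x}
def shortcut (u v w : Fin n) : Edge n → ℝ :=
  fun e => indic v w e - indic v u e - indic u w e
def gtspPolar (n : ℕ) : Set (Edge n → ℝ) := {b | ∀ x ∈ gtsp n, 1 ≤ dot b x}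

/-- The face of `S` defined by `a ∈ D_S`. -/
def faceS (a : Edge n → ℝ) : Set (Edge n → ℝ) :=
  {x ∈ stsp n | dot a x = dot a (zvec n) - 1}

/-- `D_S`: the points `a ∈ L` whose inequality `a·x ≥ a·z − 1` is valid for `S`
and defines a nonempty good face of `S`. -/
def DS (n : ℕ) : Set (Edge n → ℝ) :=
  {a | (∀ u, dot (delta u) a = 0) ∧
       (∀ x ∈ stsp n, dot a (zvec n) - 1 ≤ dot a x) ∧
       (faceS a).Nonempty ∧ IsGood (faceS a)}

/-- `D_P`: TT points of `P^△` defining nonempty good faces of `P`. -/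
def DP (n : ℕ) : Set (Edge n → ℝ) :=
  {b | b ∈ gtspPolar n ∧ IsTT b ∧
       ({x ∈ gtsp n | dot b x = 1}).Nonempty ∧ IsGood {x ∈ gtsp n | dot b x = 1}}

/-- `𝔉(a)`: faces of `P` definable by rotated versions of `a·x ≥ a·z − 1`. -/
def Frot (a : Edge n → ℝ) : Set (Set (Edge n → ℝ)) :=
  {F | ∃ ξ : Fin n → ℝ,
    (∀ x ∈ gtsp n,
      dot a (zvec n) - 1 + dot (∑ u, ξ u • delta u) (zvec n)
        ≤ dot (a + ∑ u, ξ u • delta u) x) ∧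
    F = {x ∈ gtsp n |
      dot (a + ∑ u, ξ u • delta u) x
        = dot a (zvec n) - 1 + dot (∑ u, ξ u • delta u) (zvec n)}}

/-- `E^u(a)`: the edges achieving the minimal triangle slack rooted at `u`. -/
def Eu (a : Edge n → ℝ) (u : Fin n) : Set (Edge n) :=
  {e | ∃ v w, RootedTri u v w ∧ e.val = s(v, w) ∧ tri a u v w = lam a u}

def IsFacetP (n : ℕ) (G : Set (Edge n → ℝ)) : Prop :=
  IsFaceOf (gtsp n) G ∧ adim G = n * (n - 1) / 2 - 1
def IsFacetS (n : ℕ) (F : Set (Edge n → ℝ)) : Prop :=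
  IsFaceOf (stsp n) F ∧ adim F + 1 = adim (stsp n)
def IsNRFacet (n : ℕ) (G : Set (Edge n → ℝ)) : Prop :=
  IsFacetP n G ∧ IsFacetS n (G ∩ stsp n)
def IsDegreeFacet (n : ℕ) (G : Set (Edge n → ℝ)) : Prop :=
  ∃ u, G = {x ∈ gtsp n | dot (delta u) x = 1}
def IsNonNegFacet (n : ℕ) (G : Set (Edge n → ℝ)) : Prop :=
  ∃ e : Edge n, G = {x ∈ gtsp n | x e = 0}
def IsNonNRFacet (n : ℕ) (G : Set (Edge n → ℝ)) : Prop :=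
  IsFacetP n G ∧ IsGood G ∧ ¬ IsDegreeFacet n G ∧
    adim (G ∩ stsp n) + 1 < adim (stsp n)

/-- Solution set of the relaxation `R_B` (degree inequalities). -/
def RBge {k : ℕ} (n : ℕ) (b : Fin k → Edge n → ℝ) : Set (Edge n → ℝ) :=
  {x | (∀ j, 1 ≤ dot (b j) x) ∧ (∀ v, 1 ≤ dot (delta v) x) ∧ ∀ e, 0 ≤ x e}

/-- Solution set of `R_B` with degree equations. -/
def RBeq {k : ℕ} (n : ℕ) (b : Fin k → Edge n → ℝ) : Set (Edge n → ℝ) :=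
  {x | (∀ j, 1 ≤ dot (b j) x) ∧ (∀ v, dot (delta v) x = 1) ∧ ∀ e, 0 ≤ x e}

/-- The parsimonious property of the relaxation `R_B`. -/
def Parsimonious {k : ℕ} (n : ℕ) (b : Fin k → Edge n → ℝ) : Prop :=
  ∀ c : Edge n → ℝ, IsMetric c →
    sInf (dot c '' RBge n b) = sInf (dot c '' RBeq n b)

/-- Adjacency in the ridge graph of `P`. -/
def RidgeAdj (n : ℕ) (F G : Set (Edge n → ℝ)) : Prop :=
  IsFacetP n F ∧ IsFacetP n G ∧ F ≠ G ∧ adim (F ∩ G) = n * (n - 1) / 2 - 2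

/-- `q_I = Σ_{u ∉ I} δ_u`. -/
def qI (n : ℕ) (I : Finset (Fin n)) : Edge n → ℝ := ∑ u ∈ Iᶜ, delta u

/-- The face `G_I` of `P`. -/
def GI (n : ℕ) (a : Edge n → ℝ) (I : Finset (Fin n)) : Set (Edge n → ℝ) :=
  {x ∈ gtsp n | dot (theta a + qI n I) x = gamma a + dot (qI n I) (zvec n)}

end

/-!
For `a ∈ D_S`, the rotation of `a·x ≥ a·z - 1` by `∑ ξ_u δ_u` is valid for `P` iff
`ξ_u ≥ -λ_u(a)` for all `u`. Sufficiency is an induction over connected Eulerian vectors: one with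
all degrees two is a tour, and any other arises from a smaller one by a detour `vw ↦ v u w`, which
raises the left-hand side by `t_{u,vw}(a) + ξ_u ≥ 0`, or by doubling an edge `uv`, which raises it
by `2 a_{uv} + ξ_u + ξ_v ≥ 0`. Necessity comes from detouring, through `u`, a tight tour that uses
an edge of `E^u(a)`; such a tour exists because `F_a` is good.

Along the same induction, a connected Eulerian vector is tight for the rotation of `a` by `ξ` only
if its tour lies in `F_a` and every detour uses an edge of `E^u(a)` at a vertex with
`ξ_u = -λ_u(a)` (similarly for doublings). Hence, if `F_a = F_b` and `E^u(a) = E^u(b)`, the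
rotation of `b` by `ξ + λ(a) - λ(b)` defines the same face of `P`. Conversely, if `𝔉(a) = 𝔉(b)`,
the face of `a` rotated by `-λ(a)` is also a rotated face of `b`; it contains `F_a` and the detours
of tight tours through edges of `E^u(a)`, which forces `F_a ⊆ F_b` and `E^u(a) ⊆ E^u(b)`.
-/

section ConvexHull

variable {E : Type*} [AddCommGroup E] [Module ℝ E]

lemma mem_convexHull_setOf_eq (f : E →ₗ[ℝ] ℝ) {D : Set E} {r : ℝ} (hD : ∀ y ∈ D, r ≤ f y)
    {x : E} (hx : x ∈ convexHull ℝ D) (hfx : f x = r) :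
    x ∈ convexHull ℝ {y ∈ D | f y = r} := by
  classical
  obtain ⟨ι, _, w, z, hw₀, hw₁, hz, rfl⟩ := mem_convexHull_iff_exists_fintype.1 hx
  have hsum : ∑ i, w i * (f (z i) - r) = 0 := by
    simp only [map_sum, map_smul, smul_eq_mul] at hfx
    simp only [mul_sub, Finset.sum_sub_distrib, ← Finset.sum_mul, hw₁, hfx]
    ring
  have htight : ∀ i, w i ≠ 0 → f (z i) = r := fun i hi => by
    have := (Finset.sum_eq_zero_iff_of_nonneg fun i _ =>
      mul_nonneg (hw₀ i) (sub_nonneg.2 (hD _ (hz i)))).1 hsum i (Finset.mem_univ i)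
    linarith [(mul_eq_zero.1 this).resolve_left hi]
  rw [← Fintype.sum_subset (s := {i | w i ≠ 0})
    fun i hi => Finset.mem_filter.2 ⟨Finset.mem_univ _, left_ne_zero_of_smul hi⟩]
  exact (convex_convexHull ..).sum_mem (fun i _ => hw₀ _) (by rwa [Finset.sum_filter_ne_zero])
    fun i hi => subset_convexHull _ _ ⟨hz i, htight i (Finset.mem_filter.1 hi).2⟩

end ConvexHull

section Graphs

variable {V : Type*}

lemma connected_of_forall_adj_reachable {G G' : SimpleGraph V} (hG : G.Connected)
    (h : ∀ p q, G.Adj p q → G'.Reachable p q) : G'.Connected := by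
  have := hG.nonempty
  refine ⟨fun p q => ?_⟩
  have := (SimpleGraph.reachable_iff_reflTransGen p q).mp (hG.preconnected p q)
  refine (SimpleGraph.reachable_iff_reflTransGen p q).mpr
    (Relation.reflTransGen_closed (fun a b hab => ?_) _ _ this)
  exact (SimpleGraph.reachable_iff_reflTransGen a b).mp (h a b hab)

lemma mem_of_reachable_of_closed {G : SimpleGraph V} {S : Set V}
    (hS : ∀ a b, a ∈ S → G.Adj a b → b ∈ S) {a b : V} (hab : G.Reachable a b) (ha : a ∈ S) :
    b ∈ S := by
  obtain ⟨p⟩ := hab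
  induction p with
  | nil => exact ha
  | cons h _ ih => exact ih (hS _ _ ha h)

lemma not_reachable_deleteIncidenceSet (G : SimpleGraph V) {u v : V} (h : u ≠ v) :
    ¬ (G.deleteIncidenceSet u).Reachable u v := by
  rintro ⟨p⟩
  cases p with
  | nil => exact h rfl
  | cons hadj _ => exact (SimpleGraph.deleteIncidenceSet_adj.mp hadj).2.1 rfl

lemma sum_sum_natCast_eq_zero_of_symm [DecidableEq V] (C : Finset V) (f : V → V → ℕ)
    (hsymm : ∀ p q, f p q = f q p) (hdiag : ∀ p, f p p = 0) :
    ∑ p ∈ C, ∑ q ∈ C, (f p q : ZMod 2) = 0 := by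
  rw [← Finset.sum_product' C C fun p q => (f p q : ZMod 2)]
  refine Finset.sum_involution (fun pq _ => pq.swap) (fun pq _ => ?_) (fun pq _ hpq hswap => ?_)
    (fun pq hpq => Finset.mem_product.2 (Finset.mem_product.1 hpq).symm) (fun pq _ => rfl)
  · simp only [Prod.fst_swap, Prod.snd_swap, hsymm pq.2, CharTwo.add_self_eq_zero]
  · obtain ⟨p, q⟩ := pq
    obtain rfl : q = p := congrArg Prod.fst hswap
    simp [hdiag] at hpq

end Graphs

lemma finRotate_ne_self {m : ℕ} (hm : 2 ≤ m) (i : Fin m) : finRotate m i ≠ i := by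
  obtain ⟨m, rfl⟩ : ∃ k, m = k + 1 := ⟨m - 1, by omega⟩
  rw [finRotate_apply, Ne, add_eq_left, Fin.ext_iff, Fin.val_one', Fin.val_zero,
    Nat.mod_eq_of_lt (by omega)]
  omega

lemma finRotate_finRotate_ne_self {m : ℕ} (hm : 3 ≤ m) (i : Fin m) :
    finRotate m (finRotate m i) ≠ i := by
  obtain ⟨m, rfl⟩ : ∃ k, m = k + 1 := ⟨m - 1, by omega⟩
  rw [finRotate_apply, finRotate_apply, Ne, add_assoc, add_eq_left, Fin.ext_iff,
    Fin.val_add, Fin.val_one', Fin.val_zero, Nat.mod_eq_of_lt (by omega : 1 < m + 1),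
    Nat.mod_eq_of_lt (by omega : 1 + 1 < m + 1)]
  omega

def edge {u v : Fin n} (h : u ≠ v) : Edge n := ⟨s(u, v), mt Sym2.mk_isDiag_iff.mp h⟩

lemma exists_eq_edge (e : Edge n) : ∃ (u v : Fin n) (h : u ≠ v), e = edge h := by
  obtain ⟨e, he⟩ := e
  induction e with
  | _ u v => exact ⟨u, v, fun huv => he (Sym2.mk_isDiag_iff.mpr huv), rfl⟩

lemma mem_edge {s u v : Fin n} (h : u ≠ v) : s ∈ (edge h).val ↔ s = u ∨ s = v := Sym2.mem_iff

lemma edge_eq_edge_iff {u v p q : Fin n} (h : u ≠ v) (h' : p ≠ q) :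
    edge h = edge h' ↔ (u = p ∧ v = q) ∨ (u = q ∧ v = p) :=
  Subtype.ext_iff.trans Sym2.eq_iff

lemma edge_comm {u v : Fin n} (h : u ≠ v) : edge h.symm = edge h := Subtype.ext Sym2.eq_swap

lemma ev_of_ne (a : Edge n → ℝ) {u v : Fin n} (h : u ≠ v) : ev a u v = a (edge h) := dif_neg h

@[simp] lemma ev_self (a : Edge n → ℝ) (u : Fin n) : ev a u u = 0 := dif_pos rfl

lemma ev_add (x y : Edge n → ℝ) (u v : Fin n) : ev (x + y) u v = ev x u v + ev y u v := by
  unfold ev; split_ifs <;> simp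

lemma ev_sub (x y : Edge n → ℝ) (u v : Fin n) : ev (x - y) u v = ev x u v - ev y u v := by
  unfold ev; split_ifs <;> simp

lemma ev_smul (c : ℝ) (x : Edge n → ℝ) (u v : Fin n) : ev (c • x) u v = c * ev x u v := by
  unfold ev; split_ifs <;> simp

lemma indic_apply {u v : Fin n} (h : u ≠ v) (e : Edge n) :
    indic u v e = if e = edge h then 1 else 0 := by
  simp only [indic, Subtype.ext_iff]
  rfl

lemma indic_comm (u v : Fin n) : indic u v = indic v u := by
  ext e
  simp only [indic, Sym2.eq_swap]

lemma shortcut_eq (u v w : Fin n) : shortcut u v w = indic v w - indic u v - indic u w := by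
  rw [indic_comm u v]
  rfl

lemma ev_indic {a b : Fin n} (h : a ≠ b) (p q : Fin n) :
    ev (indic a b) p q = if s(p, q) = s(a, b) then 1 else 0 := by
  rcases eq_or_ne p q with rfl | hpq
  · rw [ev_self, if_neg]
    exact fun hp => h (Sym2.mk_isDiag_iff.mp (hp ▸ Sym2.mk_isDiag_iff.mpr rfl))
  · rw [ev_of_ne _ hpq]
    rfl

lemma ev_shortcut {u v w : Fin n} (h : RootedTri u v w) (p q : Fin n) :
    ev (shortcut u v w) p q = (if s(p, q) = s(v, w) then 1 else 0)
      - (if s(p, q) = s(u, v) then 1 else 0) - (if s(p, q) = s(u, w) then 1 else 0) := by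
  rw [shortcut_eq, ev_sub, ev_sub, ev_indic h.1, ev_indic h.2.1, ev_indic h.2.2]

lemma ev_shortcut_uv {u v w : Fin n} (h : RootedTri u v w) : ev (shortcut u v w) u v = -1 := by
  obtain ⟨hvw, huv, huw⟩ := h
  simp [ev_shortcut ⟨hvw, huv, huw⟩, huv, huw, hvw]

lemma ev_shortcut_uw {u v w : Fin n} (h : RootedTri u v w) : ev (shortcut u v w) u w = -1 := by
  obtain ⟨hvw, huv, huw⟩ := h
  simp [ev_shortcut ⟨hvw, huv, huw⟩, huv, huw, hvw.symm]

lemma ev_shortcut_vw {u v w : Fin n} (h : RootedTri u v w) : ev (shortcut u v w) v w = 1 := by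
  obtain ⟨hvw, huv, huw⟩ := h
  simp [ev_shortcut ⟨hvw, huv, huw⟩, huv.symm, huw.symm, hvw]

lemma ev_le_ev_add_shortcut (x : Edge n → ℝ) {u v w p q : Fin n} (h : RootedTri u v w)
    (hv : s(p, q) ≠ s(u, v)) (hw : s(p, q) ≠ s(u, w)) :
    ev x p q ≤ ev (x + shortcut u v w) p q := by
  rw [ev_add, ev_shortcut h, if_neg hv, if_neg hw]
  split_ifs <;> linarith

lemma supportGraph_adj_of_le {x y : Edge n → ℝ} {p q : Fin n}
    (hpq : (supportGraph x).Adj p q) (hle : ev x p q ≤ ev y p q) :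
    (supportGraph y).Adj p q :=
  ⟨hpq.1, hpq.2.trans_le hle⟩

lemma supportGraph_neighborSet (x : Edge n → ℝ) (u : Fin n) :
    (supportGraph x).neighborSet u = ↑(Finset.univ.filter fun v => 0 < ev x u v) := by
  ext v
  simp only [SimpleGraph.mem_neighborSet, Finset.coe_filter, Finset.mem_univ, true_and,
    Set.mem_ofPred_eq]
  exact ⟨And.right, fun h => ⟨by rintro rfl; simp at h, h⟩⟩

def dotₗ (c : Edge n → ℝ) : (Edge n → ℝ) →ₗ[ℝ] ℝ := dotProductBilin ℝ ℝ c

@[simp] lemma dotₗ_apply (c x : Edge n → ℝ) : dotₗ c x = dot c x := rfl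

lemma dot_comm (a x : Edge n → ℝ) : dot a x = dot x a := dotProduct_comm a x

lemma dot_add (a x y : Edge n → ℝ) : dot a (x + y) = dot a x + dot a y := dotProduct_add a x y

lemma dot_sub (a x y : Edge n → ℝ) : dot a (x - y) = dot a x - dot a y := dotProduct_sub a x y

lemma dot_smul (a : Edge n → ℝ) (c : ℝ) (x : Edge n → ℝ) : dot a (c • x) = c * dot a x :=
  dotProduct_smul c a x

lemma add_dot (a b x : Edge n → ℝ) : dot (a + b) x = dot a x + dot b x := add_dotProduct a b x

lemma sum_smul_dot (ξ : Fin n → ℝ) (b : Fin n → Edge n → ℝ) (x : Edge n → ℝ) :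
    dot (∑ u, ξ u • b u) x = ∑ u, ξ u * dot (b u) x := by
  rw [dot_comm, ← dotₗ_apply, map_sum]
  simp only [map_smul, dotₗ_apply, smul_eq_mul, dot_comm x]

lemma dot_indic (c : Edge n → ℝ) (u v : Fin n) : dot c (indic u v) = ev c u v := by
  rcases eq_or_ne u v with rfl | h
  · simp only [dot, indic, ev_self]
    refine Finset.sum_eq_zero fun e _ => ?_
    rw [if_neg fun (he : e.val = s(u, u)) => e.2 (he ▸ Sym2.mk_isDiag_iff.mpr rfl), mul_zero]
  · simp only [dot, indic_apply h, mul_ite, mul_one, mul_zero, Finset.sum_ite_eq',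
      Finset.mem_univ, if_true, ev_of_ne c h]

lemma dot_shortcut (c : Edge n → ℝ) (u v w : Fin n) :
    dot c (shortcut u v w) = -tri c u v w := by
  rw [shortcut_eq, dot_sub, dot_sub, dot_indic, dot_indic, dot_indic, tri, ev_symm c v u]
  ring

lemma dot_sub_shortcut (c x : Edge n → ℝ) (u v w : Fin n) :
    dot c (x - shortcut u v w) = dot c x + tri c u v w := by
  rw [dot_sub, dot_shortcut, sub_neg_eq_add]

lemma dot_add_two_smul_indic (c x : Edge n → ℝ) (u v : Fin n) :
    dot c (x + (2 : ℝ) • indic u v) = dot c x + 2 * ev c u v := by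
  rw [dot_add, dot_smul, dot_indic]

lemma tri_add (a b : Edge n → ℝ) (u v w : Fin n) :
    tri (a + b) u v w = tri a u v w + tri b u v w := by
  simp only [tri, ev_add]
  ring

lemma tri_eq_neg_dot (c : Edge n → ℝ) (u v w : Fin n) :
    tri c u v w = -dot (shortcut u v w) c := by
  rw [dot_comm, dot_shortcut, neg_neg]

lemma ev_delta (s : Fin n) {u v : Fin n} (h : u ≠ v) :
    ev (delta s) u v = if s = u ∨ s = v then 1 / 2 else 0 := by
  simp only [ev_of_ne _ h, delta, mem_edge]

lemma tri_delta (s : Fin n) {u v w : Fin n} (h : RootedTri u v w) :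
    tri (delta s) u v w = if s = u then 1 else 0 := by
  obtain ⟨hvw, huv, huw⟩ := h
  rw [tri, ev_symm, ev_delta s huv, ev_delta s huw, ev_delta s hvw]
  by_cases hu : s = u
  · subst hu
    simp [huv, huw]
    norm_num
  · by_cases hv : s = v <;> by_cases hw : s = w <;> simp_all

lemma tri_sum_smul_delta (ξ : Fin n → ℝ) {u v w : Fin n} (h : RootedTri u v w) :
    tri (∑ s, ξ s • delta s) u v w = ξ u := by
  rw [tri_eq_neg_dot, dot_comm, sum_smul_dot, ← Finset.sum_neg_distrib]
  simp_rw [← mul_neg, dot_comm _ (shortcut u v w), ← tri_eq_neg_dot, tri_delta _ h]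
  simp

lemma two_mul_ev_sum_smul_delta (ξ : Fin n → ℝ) {u v : Fin n} (h : u ≠ v) :
    2 * ev (∑ s, ξ s • delta s) u v = ξ u + ξ v := by
  have hs : ∀ s, 2 * (ξ s * ev (delta s) u v) =
      (if s = u then ξ u else 0) + (if s = v then ξ v else 0) := by
    intro s
    rw [ev_delta s h]
    by_cases hu : s = u <;> by_cases hv : s = v <;> simp_all <;> ring
  rw [← dot_indic, sum_smul_dot, Finset.mul_sum]
  simp_rw [dot_indic, hs]
  simp [Finset.sum_add_distrib]

lemma tri_rot (a : Edge n → ℝ) (ξ : Fin n → ℝ) {u v w : Fin n} (h : RootedTri u v w) :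
    tri (a + ∑ s, ξ s • delta s) u v w = tri a u v w + ξ u := by
  rw [tri_add, tri_sum_smul_delta ξ h]

lemma two_mul_ev_rot (a : Edge n → ℝ) (ξ : Fin n → ℝ) {u v : Fin n} (h : u ≠ v) :
    2 * ev (a + ∑ s, ξ s • delta s) u v = 2 * ev a u v + ξ u + ξ v := by
  rw [ev_add, mul_add, two_mul_ev_sum_smul_delta ξ h, add_assoc]

lemma degree_eq_sum_ev (x : Edge n → ℝ) (u : Fin n) : degree x u = ∑ v, ev x u v := by
  rw [← Finset.sum_erase _ (ev_self x u), degree, ← Finset.sum_filter]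
  refine (Finset.sum_bij (fun v hv => edge (Finset.ne_of_mem_erase hv).symm) ?_ ?_ ?_ ?_).symm
  · intro v _
    simp [mem_edge]
  · intro v hv v' hv' heq
    rcases (edge_eq_edge_iff _ _).mp heq with ⟨-, h⟩ | ⟨h, -⟩
    · exact h
    · exact absurd h (Finset.ne_of_mem_erase hv').symm
  · intro e he
    obtain ⟨p, q, hpq, rfl⟩ := exists_eq_edge e
    rcases (mem_edge hpq).mp (Finset.mem_filter.mp he).2 with rfl | rfl
    · exact ⟨q, by simpa using hpq.symm, rfl⟩
    · exact ⟨p, by simpa using hpq, edge_comm hpq⟩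
  · intro v _
    exact ev_of_ne x _

lemma degree_eq_two_mul_dot_delta (x : Edge n → ℝ) (u : Fin n) :
    degree x u = 2 * dot (delta u) x := by
  rw [degree, dot, Finset.mul_sum]
  refine Finset.sum_congr rfl fun e _ => ?_
  unfold delta
  split_ifs <;> ring

lemma degree_add (x y : Edge n → ℝ) (u : Fin n) :
    degree (x + y) u = degree x u + degree y u := by
  simp only [degree_eq_two_mul_dot_delta, dot_add]
  ring

lemma degree_sub (x y : Edge n → ℝ) (u : Fin n) :
    degree (x - y) u = degree x u - degree y u := by
  simp only [degree_eq_two_mul_dot_delta, dot_sub]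
  ring

lemma degree_smul (c : ℝ) (x : Edge n → ℝ) (u : Fin n) : degree (c • x) u = c * degree x u := by
  simp only [degree_eq_two_mul_dot_delta, dot_smul]
  ring

lemma degree_indic (s : Fin n) {u v : Fin n} (h : u ≠ v) :
    degree (indic u v) s = if s = u ∨ s = v then 1 else 0 := by
  rw [degree_eq_two_mul_dot_delta, dot_indic, ev_delta s h]
  split_ifs <;> norm_num

lemma degree_shortcut (s : Fin n) {u v w : Fin n} (h : RootedTri u v w) :
    degree (shortcut u v w) s = if s = u then -2 else 0 := by
  rw [degree_eq_two_mul_dot_delta, dot_shortcut, tri_delta s h]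
  split_ifs <;> norm_num

lemma dot_delta_zvec (hn : 2 ≤ n) (u : Fin n) : dot (delta u) (zvec n) = 1 := by
  have hdeg : degree (zvec n) u = ((n : ℝ) - 1) * (2 / ((n : ℝ) - 1)) := by
    rw [degree_eq_sum_ev, ← Finset.sum_erase _ (ev_self _ u),
      Finset.sum_congr rfl fun v hv => ev_of_ne (zvec n) (Finset.ne_of_mem_erase hv).symm,
      Finset.sum_const, Finset.card_erase_of_mem (Finset.mem_univ u), Finset.card_univ,
      Fintype.card_fin, nsmul_eq_mul, Nat.cast_sub (by omega), Nat.cast_one]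
    rfl
  have hn' : (n : ℝ) - 1 ≠ 0 := by
    have : (2 : ℝ) ≤ n := by exact_mod_cast hn
    linarith
  rw [degree_eq_two_mul_dot_delta, mul_div_cancel₀ _ hn'] at hdeg
  linarith

lemma dot_sum_smul_delta_of_forall {x : Edge n → ℝ} (hx : ∀ u, dot (delta u) x = 1)
    (ξ : Fin n → ℝ) : dot (∑ u, ξ u • delta u) x = ∑ u, ξ u := by
  simp [sum_smul_dot, hx]

lemma dot_sum_smul_delta_zvec (hn : 2 ≤ n) (ξ : Fin n → ℝ) :
    dot (∑ u, ξ u • delta u) (zvec n) = ∑ u, ξ u :=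
  dot_sum_smul_delta_of_forall (dot_delta_zvec hn) ξ

lemma exists_ne_ne (hn : 3 ≤ n) (u v : Fin n) : ∃ w : Fin n, w ≠ u ∧ w ≠ v := by
  obtain ⟨w, hw⟩ : ((Finset.univ : Finset (Fin n)) \ {u, v}).Nonempty := by
    rw [← Finset.card_pos]
    have := Finset.le_card_sdiff ({u, v} : Finset (Fin n)) Finset.univ
    have := Finset.card_le_two (a := u) (b := v)
    simp only [Finset.card_univ, Fintype.card_fin] at *
    omega
  simp only [Finset.mem_sdiff, Finset.mem_insert, Finset.mem_singleton, not_or] at hw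
  exact ⟨w, hw.2⟩

lemma RootedTri.of_ne {u v w : Fin n} (huv : u ≠ v) (hwu : w ≠ u) (hwv : w ≠ v) :
    RootedTri u v w :=
  ⟨hwv.symm, huv, hwu.symm⟩

lemma finite_tri (a : Edge n → ℝ) (u : Fin n) :
    {r | ∃ v w, RootedTri u v w ∧ r = tri a u v w}.Finite :=
  (Set.finite_range fun p : Fin n × Fin n => tri a u p.1 p.2).subset
    (by rintro r ⟨v, w, _, rfl⟩; exact ⟨(v, w), rfl⟩)

lemma lam_le (a : Edge n → ℝ) {u v w : Fin n} (h : RootedTri u v w) : lam a u ≤ tri a u v w :=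
  csInf_le (finite_tri a u).bddBelow ⟨v, w, h, rfl⟩

lemma exists_tri_eq_lam (hn : 3 ≤ n) (a : Edge n → ℝ) (u : Fin n) :
    ∃ v w, RootedTri u v w ∧ tri a u v w = lam a u := by
  obtain ⟨v, hvu, -⟩ := exists_ne_ne hn u u
  obtain ⟨w, hwu, hwv⟩ := exists_ne_ne hn u v
  have hne : {r | ∃ v w, RootedTri u v w ∧ r = tri a u v w}.Nonempty :=
    ⟨_, v, w, .of_ne hvu.symm hwu hwv, rfl⟩
  obtain ⟨v, w, h, hr⟩ := hne.csInf_mem (finite_tri a u)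
  exact ⟨v, w, h, hr.symm⟩

lemma tri_swap (a : Edge n → ℝ) (u v w : Fin n) : tri a u v w = tri a u w v := by
  simp only [tri, ev_symm a v u, ev_symm a w u, ev_symm a v w]
  ring

lemma tri_add_tri (a : Edge n → ℝ) (u v w : Fin n) :
    tri a u v w + tri a v u w = 2 * ev a u v := by
  simp only [tri, ev_symm a v u]
  ring

lemma lam_add_lam_le (hn : 3 ≤ n) (a : Edge n → ℝ) {u v : Fin n} (h : u ≠ v) :
    lam a u + lam a v ≤ 2 * ev a u v := by
  obtain ⟨w, hwu, hwv⟩ := exists_ne_ne hn u v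
  linarith [lam_le a (.of_ne h hwu hwv), lam_le a (.of_ne h.symm hwv hwu), tri_add_tri a u v w]

lemma mem_Eu_iff (a : Edge n → ℝ) {u v w : Fin n} (h : RootedTri u v w) :
    edge h.1 ∈ Eu a u ↔ tri a u v w = lam a u := by
  refine ⟨?_, fun ht => ⟨v, w, h, rfl, ht⟩⟩
  rintro ⟨v', w', -, he, ht⟩
  rcases Sym2.eq_iff.mp he with ⟨rfl, rfl⟩ | ⟨rfl, rfl⟩
  · exact ht
  · rwa [tri_swap]

lemma tri_eq_lam_of_Eu_eq {a b : Edge n → ℝ} (hE : ∀ u, Eu a u = Eu b u) {u v w : Fin n}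
    (h : RootedTri u v w) (ha : tri a u v w = lam a u) : tri b u v w = lam b u :=
  (mem_Eu_iff b h).mp (hE u ▸ (mem_Eu_iff a h).mpr ha)

/-- Equality in `lam_add_lam_le` makes all triangles over the edge `uv` tight. -/
lemma two_mul_ev_eq_of_Eu_eq (hn : 3 ≤ n) {a b : Edge n → ℝ} (hE : ∀ u, Eu a u = Eu b u)
    {u v : Fin n} (h : u ≠ v) (ha : 2 * ev a u v = lam a u + lam a v) :
    2 * ev b u v = lam b u + lam b v := by
  obtain ⟨w, hwu, hwv⟩ := exists_ne_ne hn u v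
  have h₁ : RootedTri u v w := .of_ne h hwu hwv
  have h₂ : RootedTri v u w := .of_ne h.symm hwv hwu
  have := lam_le a h₁
  have := lam_le a h₂
  have := tri_add_tri a u v w
  rw [← tri_add_tri b u v w, tri_eq_lam_of_Eu_eq hE h₁ (by linarith),
    tri_eq_lam_of_Eu_eq hE h₂ (by linarith)]

def NatValued (x : Edge n → ℝ) : Prop := ∀ e, ∃ m : ℕ, x e = m

namespace NatValued

variable {x : Edge n → ℝ}

lemma nonneg (hx : NatValued x) (e : Edge n) : 0 ≤ x e := by
  obtain ⟨m, hm⟩ := hx e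
  exact hm ▸ m.cast_nonneg

lemma exists_ev_eq (hx : NatValued x) (p q : Fin n) : ∃ m : ℕ, ev x p q = m := by
  unfold ev
  split_ifs
  exacts [⟨0, by simp⟩, hx _]

lemma ev_nonneg (hx : NatValued x) (p q : Fin n) : 0 ≤ ev x p q := by
  obtain ⟨m, hm⟩ := hx.exists_ev_eq p q
  exact hm ▸ m.cast_nonneg

lemma one_le_ev_of_pos (hx : NatValued x) {p q : Fin n} (h : 0 < ev x p q) : 1 ≤ ev x p q := by
  obtain ⟨m, hm⟩ := hx.exists_ev_eq p q
  rw [hm] at h ⊢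
  exact_mod_cast Nat.one_le_iff_ne_zero.2 (by rintro rfl; simp at h)

lemma ev_eq_one_of_lt_two (hx : NatValued x) {p q : Fin n} (hpos : 0 < ev x p q)
    (h2 : ev x p q < 2) : ev x p q = 1 := by
  obtain ⟨m, hm⟩ := hx.exists_ev_eq p q
  rw [hm] at hpos h2 ⊢
  have : 0 < m := by exact_mod_cast hpos
  have : m < 2 := by exact_mod_cast h2
  exact_mod_cast (by omega : m = 1)

lemma add_indic (hx : NatValued x) {u v : Fin n} (h : u ≠ v) : NatValued (x + indic u v) :=
  fun e => by
  obtain ⟨m, hm⟩ := hx e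
  rw [Pi.add_apply, indic_apply h, hm]
  split_ifs
  exacts [⟨m + 1, by push_cast; ring⟩, ⟨m, by ring⟩]

lemma sub_indic (hx : NatValued x) {u v : Fin n} (h : u ≠ v) (huv : 1 ≤ ev x u v) :
    NatValued (x - indic u v) := fun e => by
  obtain ⟨m, hm⟩ := hx e
  rw [Pi.sub_apply, indic_apply h, hm]
  split_ifs with he
  · rw [ev_of_ne x h, ← he, hm] at huv
    exact ⟨m - 1, by rw [Nat.cast_sub (by exact_mod_cast huv)]; simp⟩
  · exact ⟨m, by ring⟩

lemma ev_le_degree (hx : NatValued x) (u v : Fin n) : ev x u v ≤ degree x u := by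
  rw [degree_eq_sum_ev]
  exact Finset.single_le_sum (fun q _ => hx.ev_nonneg u q) (Finset.mem_univ v)

lemma ev_add_ev_le_degree (hx : NatValued x) (p : Fin n) {q r : Fin n} (hqr : q ≠ r) :
    ev x p q + ev x p r ≤ degree x p := by
  classical
  rw [degree_eq_sum_ev, ← Finset.sum_pair hqr]
  exact Finset.sum_le_sum_of_subset_of_nonneg (Finset.subset_univ _)
    fun s _ _ => hx.ev_nonneg p s

lemma degree_eq_card (hx : NatValued x) {u : Fin n} (h2 : ∀ v, ev x u v < 2) :
    degree x u = (Finset.univ.filter fun v => 0 < ev x u v).card := by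
  rw [degree_eq_sum_ev, ← Finset.sum_filter_of_ne fun v _ hv => (hx.ev_nonneg u v).lt_of_ne' hv,
    Finset.sum_congr rfl fun v hv => hx.ev_eq_one_of_lt_two (Finset.mem_filter.1 hv).2 (h2 v)]
  simp

end NatValued

lemma IsEulerian.natValued {x : Edge n → ℝ} (hx : IsEulerian x) : NatValued x := hx.1

lemma nextF_eq_finRotate (i : Fin n) : nextF i = finRotate n i := by
  obtain ⟨m, rfl⟩ : ∃ m, n = m + 1 := ⟨n - 1, by have := i.pos; omega⟩
  rw [finRotate_apply, Fin.ext_iff, Fin.val_add, Fin.val_one', Nat.add_mod_mod]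
  rfl

lemma ev_hamVec (hn : 2 ≤ n) (σ : Equiv.Perm (Fin n)) (k : Fin n) (v : Fin n) :
    ev (hamVec σ) (σ k) v =
      if v = σ (finRotate n k) ∨ v = σ ((finRotate n).symm k) then 1 else 0 := by
  rcases eq_or_ne (σ k) v with rfl | h
  · rw [ev_self, if_neg]
    simp only [σ.injective.eq_iff, not_or]
    refine ⟨(finRotate_ne_self hn k).symm, fun h => finRotate_ne_self hn ((finRotate n).symm k) ?_⟩
    rwa [Equiv.apply_symm_apply]
  rw [ev_of_ne _ h, hamVec]
  simp only [edge, nextF_eq_finRotate]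
  congr 1
  apply propext
  constructor
  · rintro ⟨i, hi⟩
    rcases Sym2.eq_iff.mp hi with ⟨hk, rfl⟩ | ⟨hk, rfl⟩
    · exact Or.inl (by rw [σ.injective hk])
    · exact Or.inr (by rw [σ.injective hk, Equiv.symm_apply_apply])
  · rintro (rfl | rfl)
    · exact ⟨k, rfl⟩
    · exact ⟨(finRotate n).symm k, by rw [Equiv.apply_symm_apply, Sym2.eq_swap]⟩

lemma degree_hamVec (hn : 3 ≤ n) (σ : Equiv.Perm (Fin n)) (u : Fin n) :
    degree (hamVec σ) u = 2 := by
  classical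
  obtain ⟨k, rfl⟩ := σ.surjective u
  have hne : σ (finRotate n k) ≠ σ ((finRotate n).symm k) := fun h =>
    finRotate_finRotate_ne_self hn k (by rw [σ.injective h, Equiv.apply_symm_apply])
  rw [degree_eq_sum_ev]
  simp_rw [ev_hamVec (by omega) σ k, Finset.sum_boole]
  rw [Finset.filter_or, Finset.filter_eq', Finset.filter_eq', if_pos (Finset.mem_univ _),
    if_pos (Finset.mem_univ _), ← Finset.insert_eq, Finset.card_pair hne]
  norm_num

lemma hamVec_connected (hn : 2 ≤ n) (σ : Equiv.Perm (Fin n)) :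
    (supportGraph (hamVec σ)).Connected := by
  obtain ⟨m, rfl⟩ : ∃ m, n = m + 1 := ⟨n - 1, by omega⟩
  have hadj : ∀ i, (supportGraph (hamVec σ)).Adj (σ i) (σ (finRotate _ i)) := fun i => by
    refine ⟨σ.injective.ne (finRotate_ne_self hn i).symm, ?_⟩
    rw [ev_hamVec hn, if_pos (Or.inl rfl)]
    exact one_pos
  have hreach : ∀ i, (supportGraph (hamVec σ)).Reachable (σ 0) (σ i) := by
    refine Fin.induction .rfl fun i hi => hi.trans ?_
    simpa [finRotate_apply, Fin.coeSucc_eq_succ] using (hadj i.castSucc).reachable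
  refine ⟨fun p q => ?_⟩
  obtain ⟨i, rfl⟩ := σ.surjective p
  obtain ⟨j, rfl⟩ := σ.surjective q
  exact (hreach i).symm.trans (hreach j)

lemma natValued_hamVec (σ : Equiv.Perm (Fin n)) : NatValued (hamVec σ) := fun e => by
  unfold hamVec
  split_ifs
  exacts [⟨1, by simp⟩, ⟨0, by simp⟩]

lemma isEulerian_hamVec (hn : 3 ≤ n) (σ : Equiv.Perm (Fin n)) : IsEulerian (hamVec σ) :=
  ⟨natValued_hamVec σ, hamVec_connected (by omega) σ,
    fun u => ⟨1, one_pos, by rw [degree_hamVec hn]; norm_num⟩⟩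

lemma hamVec_mem_stsp (σ : Equiv.Perm (Fin n)) : hamVec σ ∈ stsp n :=
  subset_convexHull ℝ _ ⟨σ, rfl⟩

lemma stsp_subset_gtsp (hn : 3 ≤ n) : stsp n ⊆ gtsp n :=
  convexHull_mono fun _ ⟨σ, hσ⟩ => hσ ▸ isEulerian_hamVec hn σ

lemma dot_delta_of_mem_stsp (hn : 3 ≤ n) {x : Edge n → ℝ} (hx : x ∈ stsp n) (u : Fin n) :
    dot (delta u) x = 1 := by
  refine convexHull_min ?_ (convex_hyperplane (dotₗ (delta u)).isLinear 1) hx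
  rintro _ ⟨σ, rfl⟩
  show dot (delta u) (hamVec σ) = 1
  rw [← mul_right_inj' two_ne_zero, ← degree_eq_two_mul_dot_delta, degree_hamVec hn]
  norm_num

lemma dot_rot_of_mem_stsp (hn : 3 ≤ n) {a x : Edge n → ℝ} (hx : x ∈ stsp n) (ξ : Fin n → ℝ) :
    dot (a + ∑ u, ξ u • delta u) x = dot a x + ∑ u, ξ u := by
  rw [add_dot, dot_sum_smul_delta_of_forall (dot_delta_of_mem_stsp hn hx)]

lemma exists_pos_eq_two_mul_sub_two {d : ℝ} (hd : ∃ m : ℕ, 0 < m ∧ d = 2 * m) (h4 : 4 ≤ d) :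
    ∃ m : ℕ, 0 < m ∧ d - 2 = 2 * m := by
  obtain ⟨m, -, rfl⟩ := hd
  have hm : 2 ≤ m := by exact_mod_cast (by linarith : (2 : ℝ) ≤ m)
  exact ⟨m - 1, by omega, by rw [Nat.cast_sub (by omega)]; push_cast; ring⟩

lemma IsEulerian.sub_shortcut {x : Edge n → ℝ} (hx : IsEulerian x) {u v w : Fin n}
    (h : RootedTri u v w) (hvw : 1 ≤ ev x v w) : IsEulerian (x - shortcut u v w) := by
  have hint := hx.natValued
  obtain ⟨-, hconn, hdeg⟩ := hx
  have hev : ∀ p q, ev (x - shortcut u v w) p q = ev x p q - ev (shortcut u v w) p q :=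
    ev_sub _ _
  refine ⟨?_, ?_, fun s => ?_⟩
  · rw [show x - shortcut u v w = x - indic v w + indic u v + indic u w by
      rw [shortcut_eq]; abel]
    exact ((hint.sub_indic h.1 hvw).add_indic h.2.1).add_indic h.2.2
  · refine connected_of_forall_adj_reachable hconn fun p q hpq => ?_
    by_cases hpq' : s(p, q) = s(v, w)
    · have hvu : (supportGraph (x - shortcut u v w)).Adj v u := ⟨h.2.1.symm, by
        rw [ev_symm, hev, ev_shortcut_uv h]
        linarith [hint.ev_nonneg u v]⟩
      have huw : (supportGraph (x - shortcut u v w)).Adj u w := ⟨h.2.2, by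
        rw [hev, ev_shortcut_uw h]
        linarith [hint.ev_nonneg u w]⟩
      rcases Sym2.eq_iff.mp hpq' with ⟨rfl, rfl⟩ | ⟨rfl, rfl⟩
      · exact hvu.reachable.trans huw.reachable
      · exact (hvu.reachable.trans huw.reachable).symm
    · refine (supportGraph_adj_of_le hpq ?_).reachable
      rw [hev, ev_shortcut h, if_neg hpq']
      split_ifs <;> linarith
  · rw [degree_sub, degree_shortcut s h]
    split_ifs with hs
    · obtain ⟨m, hm, hd⟩ := hdeg s
      exact ⟨m + 1, by omega, by rw [hd]; push_cast; ring⟩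
    · simpa using hdeg s

lemma IsEulerian.add_shortcut {x : Edge n → ℝ} (hx : IsEulerian x) {u v w : Fin n}
    (h : RootedTri u v w) (huv : 1 ≤ ev x u v) (huw : 1 ≤ ev x u w) (hu : 4 ≤ degree x u)
    (hconn : (supportGraph (x + shortcut u v w)).Connected) :
    IsEulerian (x + shortcut u v w) := by
  have hint := hx.natValued
  obtain ⟨-, -, hdeg⟩ := hx
  refine ⟨?_, hconn, fun s => ?_⟩
  · rw [show x + shortcut u v w = x - indic u v - indic u w + indic v w by
      rw [shortcut_eq]; abel]
    refine ((hint.sub_indic h.2.1 huv).sub_indic h.2.2 ?_).add_indic h.1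
    rw [ev_sub, ev_indic h.2.1, if_neg (by simp [h.1.symm, h.2.1])]
    linarith
  · rw [degree_add, degree_shortcut s h]
    split_ifs with hs
    · subst hs
      simpa [← sub_eq_add_neg] using exists_pos_eq_two_mul_sub_two (hdeg s) hu
    · simpa using hdeg s

lemma IsEulerian.sub_two_smul_indic {x : Edge n → ℝ} (hx : IsEulerian x) {u v : Fin n}
    (h : u ≠ v) (h4 : 4 ≤ ev x u v) : IsEulerian (x - (2 : ℝ) • indic u v) := by
  have hint := hx.natValued
  obtain ⟨-, hconn, hdeg⟩ := hx
  refine ⟨?_, ?_, fun s => ?_⟩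
  · rw [two_smul, ← sub_sub]
    refine (hint.sub_indic h (by linarith)).sub_indic h ?_
    rw [ev_sub, ev_indic h, if_pos rfl]
    linarith
  · refine connected_of_forall_adj_reachable hconn fun p q hpq => ?_
    refine SimpleGraph.Adj.reachable ⟨hpq.1, ?_⟩
    rw [ev_sub, ev_smul, ev_indic h]
    split_ifs with hpq'
    · rw [ev_of_ne x hpq.1, show edge hpq.1 = edge h from Subtype.ext hpq', ← ev_of_ne x h]
      linarith
    · simpa using hpq.2
  · rw [degree_sub, degree_smul, degree_indic s h]
    split_ifs with hs
    · have : 4 ≤ degree x s := by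
        rcases hs with rfl | rfl
        · exact h4.trans (hint.ev_le_degree _ _)
        · exact (ev_symm x u s ▸ h4).trans (hint.ev_le_degree _ _)
      simpa using exists_pos_eq_two_mul_sub_two (hdeg s) this
    · simpa using hdeg s

lemma connected_add_shortcut {x : Edge n → ℝ} (hconn : (supportGraph x).Connected)
    {u v w : Fin n} (h : RootedTri u v w)
    (hv : (supportGraph (x + shortcut u v w)).Reachable u v)
    (hw : (supportGraph (x + shortcut u v w)).Reachable u w) :
    (supportGraph (x + shortcut u v w)).Connected := by
  refine connected_of_forall_adj_reachable hconn fun p q hpq => ?_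
  by_cases hpv : s(p, q) = s(u, v)
  · rcases Sym2.eq_iff.mp hpv with ⟨rfl, rfl⟩ | ⟨rfl, rfl⟩
    exacts [hv, hv.symm]
  by_cases hpw : s(p, q) = s(u, w)
  · rcases Sym2.eq_iff.mp hpw with ⟨rfl, rfl⟩ | ⟨rfl, rfl⟩
    exacts [hw, hw.symm]
  exact (supportGraph_adj_of_le hpq (ev_le_ev_add_shortcut x h hpv hpw)).reachable

/-- The component `C` of `v` in the graph without the edges at `u` has even degree sum and only
sends edges to `u`, so the multiplicities of the edges from `u` to `C` add up to an even number;
as `uv` is simple, `u` has a second neighbour in `C`. -/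
lemma exists_adj_reachable_deleteIncidenceSet {x : Edge n → ℝ} (hx : NatValued x)
    (hdeg : ∀ s, ∃ m : ℕ, degree x s = 2 * m) {u v : Fin n} (huv : u ≠ v) (hev : ev x u v = 1) :
    ∃ w, w ≠ v ∧ (supportGraph x).Adj u w ∧
      ((supportGraph x).deleteIncidenceSet u).Reachable v w := by
  classical
  set H := (supportGraph x).deleteIncidenceSet u
  set C := Finset.univ.filter (H.Reachable v)
  choose M hM using hx.exists_ev_eq
  have hM_symm : ∀ p q, M p q = M q p := fun p q => by
    exact_mod_cast (hM p q ▸ hM q p ▸ ev_symm x p q)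
  have hrow : ∀ p, ∑ q, (M p q : ZMod 2) = 0 := fun p => by
    obtain ⟨m, hm⟩ := hdeg p
    have : ∑ q, M p q = 2 * m := by
      rw [degree_eq_sum_ev] at hm
      exact_mod_cast (by simpa [hM] using hm : ∑ q, (M p q : ℝ) = 2 * m)
    rw [← Nat.cast_sum, this, Nat.cast_mul]
    exact zero_mul _
  have huC : u ∉ C := by simpa [C] using not_reachable_deleteIncidenceSet _ huv ∘ .symm
  have hout : ∀ p ∈ C, ∀ q ∉ C, q ≠ u → M p q = 0 := fun p hp q hq hqu => by
    by_contra hpq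
    have hadj : (supportGraph x).Adj p q :=
      ⟨fun h => hq (by rwa [← h]), by rw [hM]; exact_mod_cast Nat.pos_of_ne_zero hpq⟩
    refine hq (Finset.mem_filter.2 ⟨Finset.mem_univ _, (Finset.mem_filter.1 hp).2.trans ?_⟩)
    exact (SimpleGraph.deleteIncidenceSet_adj.2 ⟨hadj, fun h => huC (by rwa [← h]), hqu⟩).reachable
  have hcut : ∑ p ∈ C, (M p u : ZMod 2) = 0 := calc
    ∑ p ∈ C, (M p u : ZMod 2) = ∑ p ∈ C, ∑ q ∈ Cᶜ, (M p q : ZMod 2) :=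
      Finset.sum_congr rfl fun p hp => (Finset.sum_eq_single_of_mem
        (f := fun q => (M p q : ZMod 2)) u (Finset.mem_compl.2 huC)
        fun q hq hqu => by rw [hout p hp q (Finset.mem_compl.1 hq) hqu, Nat.cast_zero]).symm
    _ = ∑ p ∈ C, ∑ q, (M p q : ZMod 2) - ∑ p ∈ C, ∑ q ∈ C, (M p q : ZMod 2) := by
      simp only [← Finset.sum_add_sum_compl C, Finset.sum_add_distrib, add_sub_cancel_left]
    _ = 0 := by
      rw [Finset.sum_eq_zero fun p _ => hrow p, sum_sum_natCast_eq_zero_of_symm C M hM_symm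
        fun p => by exact_mod_cast (hM p p).symm.trans (ev_self x p), sub_zero]
  by_contra! hnone
  have : ∑ p ∈ C, (M p u : ZMod 2) = 1 := by
    rw [Finset.sum_eq_single_of_mem v (by simp [C]) fun p hp hpv => ?_]
    · have : M v u = 1 := by exact_mod_cast (hM v u).symm.trans (ev_symm x v u ▸ hev)
      simp [this]
    · by_contra hpu
      refine hnone p hpv ⟨fun h => huC (by rwa [h]), ?_⟩ (Finset.mem_filter.1 hp).2
      rw [ev_symm, hM]
      exact_mod_cast Nat.pos_of_ne_zero fun h => hpu (by simp [h])
  exact one_ne_zero (this.symm.trans hcut)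

lemma IsEulerian.add_shortcut_of_two_le {x : Edge n → ℝ} (hx : IsEulerian x) {u v w : Fin n}
    (h : RootedTri u v w) (hv : 2 ≤ ev x u v) (hw : 0 < ev x u w) (hu : 4 ≤ degree x u) :
    IsEulerian (x + shortcut u v w) := by
  have huv : (supportGraph (x + shortcut u v w)).Adj u v :=
    ⟨h.2.1, by rw [ev_add, ev_shortcut_uv h]; linarith⟩
  have hvw : (supportGraph (x + shortcut u v w)).Adj v w :=
    ⟨h.1, by rw [ev_add, ev_shortcut_vw h]; linarith [hx.natValued.ev_nonneg v w]⟩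
  exact hx.add_shortcut h (by linarith) (hx.natValued.one_le_ev_of_pos hw) hu
    (connected_add_shortcut hx.2.1 h huv.reachable (huv.reachable.trans hvw.reachable))

/-- Shortcut `v u w`, where `v` reaches a second neighbour `t` of `u` avoiding `u` and `w` is a
third neighbour; the edge `ut` then keeps `v` and `w` attached to `u`. -/
lemma IsEulerian.exists_add_shortcut_of_simple {x : Edge n → ℝ} (hx : IsEulerian x) {u : Fin n}
    (hu : 4 ≤ degree x u) (hsimple : ∀ v, ev x u v < 2) :
    ∃ v w, RootedTri u v w ∧ IsEulerian (x + shortcut u v w) := by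
  classical
  have hint := hx.natValued
  set N := Finset.univ.filter fun v => 0 < ev x u v
  have hN : 4 ≤ N.card := by
    have : (4 : ℝ) ≤ N.card := hint.degree_eq_card hsimple ▸ hu
    exact_mod_cast this
  have hmemN : ∀ {v}, v ∈ N ↔ 0 < ev x u v := by simp [N]
  have hne : ∀ {v}, v ∈ N → u ≠ v := fun hv h => by simp [← h, hmemN] at hv
  obtain ⟨v, hv⟩ := Finset.card_pos.1 (by omega : 0 < N.card)
  obtain ⟨t, htv, hadj_t, hreach⟩ := exists_adj_reachable_deleteIncidenceSet hint
    (fun s => (hx.2.2 s).imp fun _ hm => hm.2) (hne hv)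
    (hint.ev_eq_one_of_lt_two (hmemN.1 hv) (hsimple v))
  obtain ⟨w, hw⟩ := Finset.card_pos.1 (by
    rw [Finset.card_erase_of_mem (Finset.mem_erase.2 ⟨htv, hmemN.2 hadj_t.2⟩),
      Finset.card_erase_of_mem hv]
    omega : 0 < ((N.erase v).erase t).card)
  obtain ⟨hwt, hwv, hw⟩ := by simpa using hw
  have h : RootedTri u v w := .of_ne (hne hv) (hne hw).symm hwv
  set y := x + shortcut u v w
  have hsurvive : (supportGraph x).deleteIncidenceSet u ≤ supportGraph y := fun p q hpq => by
    obtain ⟨hpq, hp, hq⟩ := SimpleGraph.deleteIncidenceSet_adj.1 hpq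
    exact supportGraph_adj_of_le hpq
      (ev_le_ev_add_shortcut x h (by simp [hp, hq]) (by simp [hp, hq]))
  have hut : (supportGraph y).Adj u t := supportGraph_adj_of_le hadj_t
    (ev_le_ev_add_shortcut x h (by simp [htv, h.2.1]) (by simp [Ne.symm hwt, h.2.2]))
  have hvu : (supportGraph y).Reachable v u := (hreach.mono hsurvive).trans hut.symm.reachable
  have hvw : (supportGraph y).Adj v w :=
    ⟨h.1, by rw [ev_add, ev_shortcut_vw h]; linarith [hint.ev_nonneg v w]⟩
  exact ⟨v, w, h, hx.add_shortcut h (hint.one_le_ev_of_pos (hmemN.1 hv))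
    (hint.one_le_ev_of_pos (hmemN.1 hw)) hu
    (connected_add_shortcut hx.2.1 h hvu.symm (hvu.symm.trans hvw.reachable))⟩

theorem IsEulerian.exists_reduction {x : Edge n → ℝ} (hx : IsEulerian x) {u : Fin n}
    (hu : 4 ≤ degree x u) :
    (∃ v w, RootedTri u v w ∧ IsEulerian (x + shortcut u v w)) ∨
      ∃ v, u ≠ v ∧ IsEulerian (x - (2 : ℝ) • indic u v) := by
  by_cases hmult : ∃ v, 2 ≤ ev x u v
  · obtain ⟨v, hv⟩ := hmult
    have huv : u ≠ v := by rintro rfl; simp at hv; linarith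
    by_cases hw : ∃ w, w ≠ v ∧ 0 < ev x u w
    · obtain ⟨w, hwv, hw⟩ := hw
      have hwu : w ≠ u := by rintro rfl; simp at hw
      have h : RootedTri u v w := .of_ne huv hwu hwv
      exact Or.inl ⟨v, w, h, hx.add_shortcut_of_two_le h hv hw hu⟩
    · push Not at hw
      have : degree x u = ev x u v := by
        rw [degree_eq_sum_ev, Finset.sum_eq_single v
          (fun w _ hwv => le_antisymm (hw w hwv) (hx.natValued.ev_nonneg u w)) (by simp)]
      exact Or.inr ⟨v, huv, hx.sub_two_smul_indic huv (this ▸ hu)⟩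
  · push Not at hmult
    exact Or.inl (hx.exists_add_shortcut_of_simple hu hmult)

/-- A double edge `pq` of a 2-regular vector would form a whole component. -/
lemma IsEulerian.ev_le_one_of_degree_eq_two (hn : 3 ≤ n) {x : Edge n → ℝ} (hx : IsEulerian x)
    (h2 : ∀ s, degree x s = 2) (p q : Fin n) : ev x p q ≤ 1 := by
  have hint := hx.natValued
  by_contra! hpq
  replace hpq : 2 ≤ ev x p q := by
    obtain ⟨m, hm⟩ := hint.exists_ev_eq p q
    rw [hm] at hpq ⊢
    exact_mod_cast (by exact_mod_cast hpq : 1 < m)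
  have honly : ∀ a b, 2 ≤ ev x a b → ∀ c, c ≠ b → ev x a c ≤ 0 := fun a b h c hcb => by
    linarith [hint.ev_add_ev_le_degree a hcb.symm, h2 a]
  have hclosed : ∀ a b, a ∈ ({p, q} : Set (Fin n)) → (supportGraph x).Adj a b →
      b ∈ ({p, q} : Set (Fin n)) := by
    rintro a b (rfl | rfl) ⟨-, hab⟩
    · by_contra hb
      exact (honly _ _ hpq b (by simp_all)).not_gt hab
    · by_contra hb
      exact (honly _ _ (ev_symm x p a ▸ hpq) b (by simp_all)).not_gt hab
  obtain ⟨r, hrp, hrq⟩ := exists_ne_ne hn p q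
  rcases mem_of_reachable_of_closed hclosed (hx.2.1.preconnected p r) (Or.inl rfl) with h | h
  exacts [hrp h, hrq h]

lemma IsEulerian.ncard_neighborSet (hn : 3 ≤ n) {x : Edge n → ℝ} (hx : IsEulerian x)
    (h2 : ∀ s, degree x s = 2) (u : Fin n) : ((supportGraph x).neighborSet u).ncard = 2 := by
  rw [supportGraph_neighborSet, Set.ncard_coe_finset]
  have := hx.natValued.degree_eq_card fun v =>
    (hx.ev_le_one_of_degree_eq_two hn h2 u v).trans_lt one_lt_two
  exact_mod_cast this.symm.trans (h2 u)

open SimpleGraph in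
lemma IsEulerian.exists_isHamiltonianCycle (hn : 3 ≤ n) {x : Edge n → ℝ} (hx : IsEulerian x)
    (h2 : ∀ s, degree x s = 2) (u : Fin n) :
    ∃ p : (supportGraph x).Walk u u, p.IsHamiltonianCycle := by
  have hnb : ((supportGraph x).neighborSet u).Nonempty :=
    Set.nonempty_of_ncard_ne_zero (by rw [hx.ncard_neighborSet hn h2]; norm_num)
  obtain ⟨p, hp, hverts⟩ := IsCycles.exists_cycle_toSubgraph_verts_eq_connectedComponentSupp
    (fun v _ => hx.ncard_neighborSet hn h2 v) (c := (supportGraph x).connectedComponentMk u)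
    rfl hnb
  refine ⟨p, hp, hp.isPath_tail.isHamiltonian_of_mem fun w => ?_⟩
  have hw : w ∈ p.support := by
    rw [← Walk.mem_verts_toSubgraph, hverts, ConnectedComponent.mem_supp_iff,
      ConnectedComponent.eq]
    exact hx.2.1.preconnected w u
  rw [p.support_tail_of_not_nil hp.not_nil]
  rcases eq_or_ne w u with rfl | hwu
  · exact p.end_mem_tail_support hp.not_nil
  · rw [← p.cons_tail_support] at hw
    exact (List.mem_cons.1 hw).resolve_left hwu

open SimpleGraph in
lemma IsEulerian.exists_eq_hamVec (hn : 3 ≤ n) {x : Edge n → ℝ} (hx : IsEulerian x)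
    (h2 : ∀ s, degree x s = 2) : ∃ σ : Equiv.Perm (Fin n), x = hamVec σ := by
  classical
  obtain ⟨p, hp⟩ := hx.exists_isHamiltonianCycle hn h2 ⟨0, by omega⟩
  have hlen : p.length = n := by simpa using hp.length_eq
  have hinj : Function.Injective fun i : Fin n => p.getVert i := fun i j hij =>
    Fin.ext (hp.isCycle.getVert_injOn' (by simp; omega) (by simp; omega) hij)
  set σ := Equiv.ofBijective _ (Finite.injective_iff_bijective.1 hinj)
  have hσ : ∀ i : Fin n, σ i = p.getVert i := fun i => rfl
  have hσnext : ∀ i : Fin n, σ (nextF i) = p.getVert (i + 1) := fun i => by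
    rw [hσ]
    show p.getVert ((i + 1) % n) = _
    rcases (Nat.add_one_le_iff.2 i.isLt).lt_or_eq with hi | hi
    · rw [Nat.mod_eq_of_lt hi]
    · rw [hi, Nat.mod_self, Walk.getVert_zero, Walk.getVert_of_length_le _ hlen.le]
  have hadj : ∀ a b, (supportGraph x).Adj a b ↔ ∃ i : Fin n, s(a, b) = s(σ i, σ (nextF i)) := by
    intro a b
    rw [← hp.isCycle.adj_toSubgraph_iff_of_isCycles (fun v _ => hx.ncard_neighborSet hn h2 v)
      ((p.mem_verts_toSubgraph).2 (hp.mem_support a)), Walk.toSubgraph_adj_iff]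
    constructor
    · rintro ⟨i, hi, hlt⟩
      exact ⟨⟨i, hlen ▸ hlt⟩, by rw [hσ, hσnext, hi]⟩
    · rintro ⟨i, hi⟩
      exact ⟨i, by rw [hi, hσ, hσnext], hlen.symm ▸ i.isLt⟩
  refine ⟨σ, funext fun e => ?_⟩
  obtain ⟨a, b, hab, rfl⟩ := exists_eq_edge e
  rw [hamVec, ← ev_of_ne x hab]
  change ev x a b = if ∃ i, s(a, b) = s(σ i, σ (nextF i)) then 1 else 0
  by_cases h : (supportGraph x).Adj a b
  · rw [if_pos ((hadj a b).1 h)]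
    exact hx.natValued.ev_eq_one_of_lt_two h.2
      ((hx.ev_le_one_of_degree_eq_two hn h2 a b).trans_lt one_lt_two)
  · rw [if_neg (mt (hadj a b).2 h)]
    exact le_antisymm (not_lt.1 fun hpos => h ⟨hab, hpos⟩) (hx.natValued.ev_nonneg a b)

lemma IsEulerian.four_le_degree {x : Edge n → ℝ} (hx : IsEulerian x) {u : Fin n}
    (hu : degree x u ≠ 2) : 4 ≤ degree x u := by
  obtain ⟨m, hm, hdm⟩ := hx.2.2 u
  have : m ≠ 1 := by rintro rfl; simp [hdm] at hu
  rw [hdm]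
  have : (2 : ℝ) ≤ m := by exact_mod_cast (by omega : 2 ≤ m)
  linarith

lemma ev_one {u v : Fin n} (h : u ≠ v) : ev (1 : Edge n → ℝ) u v = 1 := by
  rw [ev_of_ne _ h, Pi.one_apply]

@[elab_as_elim]
theorem IsEulerian.induction (hn : 3 ≤ n) {P : (Edge n → ℝ) → Prop}
    (tour : ∀ σ, P (hamVec σ))
    (detour : ∀ x u v w, IsEulerian x → RootedTri u v w → P x → P (x - shortcut u v w))
    (double : ∀ x u v, IsEulerian x → u ≠ v → P x → P (x + (2 : ℝ) • indic u v))
    {x : Edge n → ℝ} (hx : IsEulerian x) : P x := by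
  induction h : ⌊dot 1 x⌋₊ using Nat.strong_induction_on generalizing x with
  | _ N ih =>
  by_cases hall : ∀ s, degree x s = 2
  · obtain ⟨σ, rfl⟩ := hx.exists_eq_hamVec hn hall
    exact tour σ
  push Not at hall
  obtain ⟨u, hu⟩ := hall
  have hlt : ∀ y : Edge n → ℝ, IsEulerian y → dot 1 y + 1 ≤ dot 1 x → ⌊dot 1 y⌋₊ < N :=
    fun y hy hyx => by
    have h0 : 0 ≤ dot 1 y := Finset.sum_nonneg fun e _ => by simpa using hy.natValued.nonneg e
    have := Nat.floor_le_floor hyx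
    rw [Nat.floor_add_one h0] at this
    omega
  rcases hx.exists_reduction (hx.four_le_degree hu) with ⟨v, w, h, hy⟩ | ⟨v, huv, hy⟩
  · have := detour _ u v w hy h (ih _ (hlt _ hy ?_) hy rfl)
    · rwa [add_sub_cancel_right] at this
    rw [dot_add, dot_shortcut, tri, ev_one h.2.1.symm, ev_one h.2.2, ev_one h.1]
    linarith
  · have := double _ u v hy huv (ih _ (hlt _ hy ?_) hy rfl)
    · rwa [sub_add_cancel] at this
    rw [dot_sub, dot_smul, dot_indic, ev_one huv]
    linarith

/-- The validity condition in `Frot`. -/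
def RotValid (a : Edge n → ℝ) (ξ : Fin n → ℝ) : Prop :=
  ∀ x ∈ gtsp n, dot a (zvec n) - 1 + dot (∑ u, ξ u • delta u) (zvec n) ≤
    dot (a + ∑ u, ξ u • delta u) x

/-- The faces collected in `Frot`. -/
def rotFace (a : Edge n → ℝ) (ξ : Fin n → ℝ) : Set (Edge n → ℝ) :=
  {x ∈ gtsp n | dot (a + ∑ u, ξ u • delta u) x =
    dot a (zvec n) - 1 + dot (∑ u, ξ u • delta u) (zvec n)}

section Rotations

variable {a b : Edge n → ℝ} {ξ : Fin n → ℝ}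

theorem le_dot_rot_of_neg_lam_le (hn : 3 ≤ n) (hval : ∀ x ∈ stsp n, dot a (zvec n) - 1 ≤ dot a x)
    (hξ : ∀ u, -lam a u ≤ ξ u) {x : Edge n → ℝ} (hx : IsEulerian x) :
    dot a (zvec n) - 1 + ∑ u, ξ u ≤ dot (a + ∑ u, ξ u • delta u) x := by
  refine hx.induction hn (fun σ => ?_) (fun y u v w _ h ih => ?_) (fun y u v _ h ih => ?_)
  · rw [dot_rot_of_mem_stsp hn (hamVec_mem_stsp σ)]
    linarith [hval _ (hamVec_mem_stsp σ)]
  · rw [dot_sub_shortcut, tri_rot a ξ h]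
    linarith [lam_le a h, hξ u]
  · rw [dot_add_two_smul_indic, two_mul_ev_rot a ξ h]
    linarith [lam_add_lam_le hn a h, hξ u, hξ v]

lemma rotValid_of_neg_lam_le (hn : 3 ≤ n) (hval : ∀ x ∈ stsp n, dot a (zvec n) - 1 ≤ dot a x)
    (hξ : ∀ u, -lam a u ≤ ξ u) : RotValid a ξ := by
  intro x hx
  rw [dot_sum_smul_delta_zvec (by omega)]
  refine convexHull_min ?_ (convex_halfSpace_ge (dotₗ _).isLinear _) hx
  intro y hy
  exact le_dot_rot_of_neg_lam_le hn hval hξ hy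

lemma exists_hamVec_tight_pos (ha : a ∈ DS n) (e : Edge n) :
    ∃ σ, dot a (hamVec σ) = dot a (zvec n) - 1 ∧ 0 < hamVec σ e := by
  obtain ⟨x, hxF, hxe⟩ := ha.2.2.2 e
  have hx := mem_convexHull_setOf_eq (dotₗ a) (D := {x | ∃ σ, x = hamVec σ})
    (fun y ⟨σ, hσ⟩ => hσ ▸ ha.2.1 _ (hamVec_mem_stsp σ)) hxF.1 hxF.2
  by_contra! hnone
  refine hxe.not_ge (convexHull_min ?_ (convex_halfSpace_le (LinearMap.proj e).isLinear 0) hx)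
  rintro _ ⟨⟨σ, rfl⟩, hσ⟩
  exact hnone σ hσ

lemma one_le_ev_hamVec_of_pos {σ : Equiv.Perm (Fin n)} {v w : Fin n} (h : v ≠ w)
    (hpos : 0 < hamVec σ (edge h)) : 1 ≤ ev (hamVec σ) v w :=
  (natValued_hamVec σ).one_le_ev_of_pos (by rwa [ev_of_ne _ h])

theorem neg_lam_le_of_rotValid (hn : 3 ≤ n) (ha : a ∈ DS n) (hvalid : RotValid a ξ) (u : Fin n) :
    -lam a u ≤ ξ u := by
  obtain ⟨v, w, h, htri⟩ := exists_tri_eq_lam hn a u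
  obtain ⟨σ, hσ, hpos⟩ := exists_hamVec_tight_pos ha (edge h.1)
  have := hvalid _ (subset_convexHull ℝ _
    ((isEulerian_hamVec hn σ).sub_shortcut h (one_le_ev_hamVec_of_pos h.1 hpos)))
  rw [dot_sum_smul_delta_zvec (by omega), dot_sub_shortcut, tri_rot a ξ h,
    dot_rot_of_mem_stsp hn (hamVec_mem_stsp σ), hσ, htri] at this
  linarith

theorem dot_rot_eq_of_dot_rot_eq (hn : 3 ≤ n)
    (hval : ∀ x ∈ stsp n, dot a (zvec n) - 1 ≤ dot a x) (hF : faceS a = faceS b)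
    (hE : ∀ u, Eu a u = Eu b u) (hξ : ∀ u, -lam a u ≤ ξ u) {x : Edge n → ℝ} (hx : IsEulerian x)
    (ht : dot (a + ∑ u, ξ u • delta u) x = dot a (zvec n) - 1 + ∑ u, ξ u) :
    dot (b + ∑ u, (ξ u + lam a u - lam b u) • delta u) x =
      dot b (zvec n) - 1 + ∑ u, (ξ u + lam a u - lam b u) := by
  revert ht
  refine hx.induction hn (fun σ => ?_) (fun y u v w hy h ih => ?_) (fun y u v hy h ih => ?_)
  · intro ht
    rw [dot_rot_of_mem_stsp hn (hamVec_mem_stsp σ)] at ht ⊢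
    have hσ : hamVec σ ∈ faceS b := hF ▸ ⟨hamVec_mem_stsp σ, by linarith⟩
    linarith [hσ.2]
  · intro ht
    rw [dot_sub_shortcut, tri_rot a _ h] at ht
    rw [dot_sub_shortcut, tri_rot b _ h]
    have := le_dot_rot_of_neg_lam_le hn hval hξ hy
    have := lam_le a h
    have := hξ u
    rw [tri_eq_lam_of_Eu_eq hE h (by linarith)]
    linarith [ih (by linarith)]
  · intro ht
    rw [dot_add_two_smul_indic, two_mul_ev_rot a _ h] at ht
    rw [dot_add_two_smul_indic, two_mul_ev_rot b _ h]
    have := le_dot_rot_of_neg_lam_le hn hval hξ hy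
    have := lam_add_lam_le hn a h
    have := hξ u
    have := hξ v
    rw [two_mul_ev_eq_of_Eu_eq hn hE h (by linarith)]
    linarith [ih (by linarith)]

lemma rotFace_subset_rotFace (hn : 3 ≤ n) (hval : ∀ x ∈ stsp n, dot a (zvec n) - 1 ≤ dot a x)
    (hF : faceS a = faceS b) (hE : ∀ u, Eu a u = Eu b u) (hξ : ∀ u, -lam a u ≤ ξ u) :
    rotFace a ξ ⊆ rotFace b fun u => ξ u + lam a u - lam b u := by
  rintro x ⟨hx, ht⟩
  refine ⟨hx, ?_⟩
  rw [dot_sum_smul_delta_zvec (by omega)] at ht ⊢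
  have := mem_convexHull_setOf_eq (dotₗ _) (D := {x | IsEulerian x})
    (fun y hy => le_dot_rot_of_neg_lam_le hn hval hξ hy) hx ht
  refine convexHull_min ?_ (convex_hyperplane (dotₗ _).isLinear _) this
  rintro y ⟨hy, hyt⟩
  exact dot_rot_eq_of_dot_rot_eq hn hval hF hE hξ hy hyt

lemma Frot_subset_Frot (hn : 3 ≤ n) (ha : a ∈ DS n) (hb : b ∈ DS n) (hF : faceS a = faceS b)
    (hE : ∀ u, Eu a u = Eu b u) : Frot a ⊆ Frot b := by
  rintro G ⟨ξ, hvalid, rfl⟩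
  have hξ := neg_lam_le_of_rotValid hn ha hvalid
  have hξ' : ∀ u, -lam b u ≤ ξ u + lam a u - lam b u := fun u => by linarith [hξ u]
  refine ⟨_, rotValid_of_neg_lam_le hn hb.2.1 hξ',
    (rotFace_subset_rotFace hn ha.2.1 hF hE hξ).antisymm ?_⟩
  simpa only [sub_add_cancel, add_sub_cancel_right] using
    rotFace_subset_rotFace hn hb.2.1 hF.symm (fun u => (hE u).symm) hξ'

lemma rotFace_neg_lam_mem_Frot (hn : 3 ≤ n) (hval : ∀ x ∈ stsp n, dot a (zvec n) - 1 ≤ dot a x) :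
    rotFace a (fun u => -lam a u) ∈ Frot a :=
  ⟨_, rotValid_of_neg_lam_le hn hval fun _ => le_rfl, rfl⟩

lemma faceS_subset_of_Frot_eq (hn : 3 ≤ n) (hval : ∀ x ∈ stsp n, dot a (zvec n) - 1 ≤ dot a x)
    (h : Frot a = Frot b) : faceS a ⊆ faceS b := by
  obtain ⟨ξ', -, hG⟩ := h ▸ rotFace_neg_lam_mem_Frot hn hval
  intro x hx
  have hxG : x ∈ rotFace a fun u => -lam a u := ⟨stsp_subset_gtsp hn hx.1, by
    rw [dot_rot_of_mem_stsp hn hx.1, dot_sum_smul_delta_zvec (by omega), hx.2]⟩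
  obtain ⟨-, ht⟩ := hG ▸ hxG
  rw [dot_rot_of_mem_stsp hn hx.1, dot_sum_smul_delta_zvec (by omega)] at ht
  exact ⟨hx.1, by linarith⟩

lemma Eu_subset_of_Frot_eq (hn : 3 ≤ n) (ha : a ∈ DS n) (hb : b ∈ DS n) (h : Frot a = Frot b)
    (u : Fin n) : Eu a u ⊆ Eu b u := by
  obtain ⟨ξ', hvalid, hG⟩ := h ▸ rotFace_neg_lam_mem_Frot hn ha.2.1
  rintro e ⟨v, w, hrt, he, htri⟩
  obtain ⟨σ, hσ, hpos⟩ := exists_hamVec_tight_pos ha (edge hrt.1)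
  have hσS := hamVec_mem_stsp σ
  have hy := (isEulerian_hamVec hn σ).sub_shortcut hrt (one_le_ev_hamVec_of_pos hrt.1 hpos)
  have hyG : hamVec σ - shortcut u v w ∈ rotFace a fun u => -lam a u :=
    ⟨subset_convexHull ℝ _ hy, by
      rw [dot_sub_shortcut, tri_rot a _ hrt, dot_rot_of_mem_stsp hn hσS,
        dot_sum_smul_delta_zvec (by omega), hσ, htri]
      ring⟩
  obtain ⟨-, ht⟩ := hG ▸ hyG
  have hσb := hvalid _ (stsp_subset_gtsp hn hσS)
  rw [dot_sub_shortcut, tri_rot b _ hrt, dot_rot_of_mem_stsp hn hσS,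
    dot_sum_smul_delta_zvec (by omega)] at ht
  rw [dot_rot_of_mem_stsp hn hσS, dot_sum_smul_delta_zvec (by omega)] at hσb
  have := neg_lam_le_of_rotValid hn hb hvalid u
  exact ⟨v, w, hrt, he, le_antisymm (by linarith) (lam_le b hrt)⟩

end Rotations

/-- for `a, b ∈ D_S`, `𝔉(a) = 𝔉(b)` iff `F_a = F_b` and
`E^u(a) = E^u(b)` for all `u`. -/
theorem stmt16 (n : ℕ) (hn : 5 ≤ n) (a b : Edge n → ℝ)
    (ha : a ∈ DS n) (hb : b ∈ DS n) :
    Frot a = Frot b ↔ (faceS a = faceS b ∧ ∀ u, Eu a u = Eu b u) := by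
  have hn₃ : 3 ≤ n := by omega
  constructor
  · intro h
    exact ⟨(faceS_subset_of_Frot_eq hn₃ ha.2.1 h).antisymm
        (faceS_subset_of_Frot_eq hn₃ hb.2.1 h.symm),
      fun u => (Eu_subset_of_Frot_eq hn₃ ha hb h u).antisymm
        (Eu_subset_of_Frot_eq hn₃ hb ha h.symm u)⟩
  · rintro ⟨hF, hE⟩
    exact (Frot_subset_Frot hn₃ ha hb hF hE).antisymm
      (Frot_subset_Frot hn₃ hb ha hF.symm fun u => (hE u).symm)

end TSP
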